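/- arXiv:1411.1624 — 3 statements merged into one kernel-verified Lean document; each statement's English description precedes it below -/
import Mathlib

section
/- Let D^{-1} : (0,∞) → (0,∞) be the inverse of the strictly decreasing bijection D. Then D^{-1}(y)/√(2(−log y)) → 1 as y → 0+, and √(2π) · y · D^{-1}(y) → 1 as y → ∞. -/
open MeasureTheory Filter Topology

/-- Standard normal density `φ(z) = e^{-z²/2}/√(2π)`. -/
noncomputable def stdPDF (z : ℝ) : ℝ := Real.exp (-(z^2)/2) / Real.sqrt (2*Real.pi)

/-- Standard normal distribution function `Φ(z) = ∫_{-∞}^z φ(t) dt`. -/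
noncomputable def stdCDF (z : ℝ) : ℝ := ∫ t in Set.Iic z, stdPDF t

/-- The function `D(z) = φ(z)/z - Φ(-z)`, a strictly decreasing bijection
from `(0,∞)` to `(0,∞)`. -/
noncomputable def Dfun (z : ℝ) : ℝ := stdPDF z / z - stdCDF (-z)

/-- The inverse `D⁻¹ : (0,∞) → (0,∞)` of `D`. -/
noncomputable def Dinv (y : ℝ) : ℝ := Function.invFunOn Dfun (Set.Ioi 0) y

/-!
Since `D'(z) = -φ(z)/z² < 0` and `D(z) → 0` as `z → ∞`, `D` is positive, and the mean value
theorem on `[z, z + 1]` gives `D(z) ≥ φ(z + 1)/(z + 1)²`. Together with `D(z) ≤ φ(z)/z` this yields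
`e^{-(z+3)²/2} ≤ D(z) ≤ e^{-z²/2}` for `z ≥ 1`, so `√(2(-log D(z)))` lies between `z` and `z + 3`;
as `D⁻¹(y) → ∞` when `y → 0⁺`, this is the first limit.
For the second, `√(2π) z D(z) = e^{-z²/2} - √(2π) z Φ(-z)` is continuous with value `1` at
`z = 0`, and `D⁻¹(y) → 0⁺` as `y → ∞`.
-/

open Real Set

lemma stdPDF_pos (z : ℝ) : 0 < stdPDF z := by
  unfold stdPDF
  positivity

lemma stdPDF_neg (z : ℝ) : stdPDF (-z) = stdPDF z := by
  simp [stdPDF]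

lemma continuous_stdPDF : Continuous stdPDF := by
  unfold stdPDF
  fun_prop

lemma hasDerivAt_stdPDF (x : ℝ) : HasDerivAt stdPDF (-x * stdPDF x) x := by
  have h : HasDerivAt (fun z : ℝ => -(z ^ 2) / 2) (-x) x :=
    ((hasDerivAt_pow 2 x).neg.div_const 2).congr_deriv (by norm_num; ring)
  have h' : HasDerivAt stdPDF (exp (-(x ^ 2) / 2) * -x / √(2 * π)) x := h.exp.div_const _
  convert h' using 1
  rw [stdPDF]
  ring

lemma stdPDF_antitoneOn : AntitoneOn stdPDF (Ici 0) := fun a ha b _ hab => by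
  unfold stdPDF
  gcongr

lemma tendsto_stdPDF_atTop : Tendsto stdPDF atTop (𝓝 0) := by
  have h : Tendsto (fun z : ℝ => -(z ^ 2) / 2) atTop atBot :=
    (tendsto_neg_atTop_atBot.comp (tendsto_pow_atTop two_ne_zero)).atBot_div_const two_pos
  have h' := (tendsto_exp_atBot.comp h).div_const (√(2 * π))
  rwa [zero_div] at h'

lemma integrable_stdPDF : Integrable stdPDF := by
  refine ((integrable_exp_neg_mul_sq (b := 1 / 2) (by norm_num)).div_const (√(2 * π))).congr
    (Eventually.of_forall fun x => ?_)
  simp only [stdPDF]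
  ring_nf

lemma stdCDF_nonneg (z : ℝ) : 0 ≤ stdCDF z :=
  setIntegral_nonneg measurableSet_Iic fun t _ => (stdPDF_pos t).le

lemma stdCDF_eq_add_intervalIntegral (a b : ℝ) :
    stdCDF b = stdCDF a + ∫ t in a..b, stdPDF t := by
  rw [← intervalIntegral.integral_Iic_sub_Iic integrable_stdPDF.integrableOn
    integrable_stdPDF.integrableOn, stdCDF, stdCDF]
  ring

lemma hasDerivAt_stdCDF (x : ℝ) : HasDerivAt stdCDF (stdPDF x) x := by
  have h := (intervalIntegral.integral_hasDerivAt_right (continuous_stdPDF.intervalIntegrable 0 x)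
    (continuous_stdPDF.stronglyMeasurableAtFilter _ _) continuous_stdPDF.continuousAt).const_add
    (stdCDF 0)
  exact h.congr_of_eventuallyEq (Eventually.of_forall (stdCDF_eq_add_intervalIntegral 0))

@[fun_prop]
lemma continuous_stdCDF : Continuous stdCDF :=
  continuous_iff_continuousAt.2 fun x => (hasDerivAt_stdCDF x).continuousAt

lemma tendsto_stdCDF_atBot : Tendsto stdCDF atBot (𝓝 0) := by
  have h : Tendsto (fun a => stdCDF 0 - ∫ t in a..0, stdPDF t) atBot (𝓝 (stdCDF 0 - stdCDF 0)) :=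
    (intervalIntegral_tendsto_integral_Iic 0 integrable_stdPDF.integrableOn tendsto_id).const_sub _
  rw [sub_self] at h
  refine h.congr fun a => ?_
  rw [stdCDF_eq_add_intervalIntegral a 0]
  ring

lemma hasDerivAt_Dfun {x : ℝ} (hx : x ≠ 0) : HasDerivAt Dfun (-(stdPDF x / x ^ 2)) x := by
  have hcdf : HasDerivAt (fun z => stdCDF (-z)) (-stdPDF x) x := by
    simpa [stdPDF_neg, Function.comp_def] using (hasDerivAt_stdCDF (-x)).comp x (hasDerivAt_neg x)
  have h : HasDerivAt Dfun ((-x * stdPDF x * x - stdPDF x * 1) / x ^ 2 - -stdPDF x) x :=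
    ((hasDerivAt_stdPDF x).div (hasDerivAt_id x) hx).sub hcdf
  convert h using 1
  field_simp
  ring

lemma continuousOn_Dfun : ContinuousOn Dfun (Ioi 0) := fun _ hx =>
  (hasDerivAt_Dfun (ne_of_gt hx)).continuousAt.continuousWithinAt

lemma strictAntiOn_Dfun : StrictAntiOn Dfun (Ioi 0) := by
  refine strictAntiOn_of_deriv_neg (convex_Ioi 0) continuousOn_Dfun fun x hx => ?_
  rw [interior_Ioi] at hx
  rw [(hasDerivAt_Dfun (ne_of_gt hx)).deriv, neg_neg_iff_pos]
  exact div_pos (stdPDF_pos x) (pow_pos hx 2)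

lemma tendsto_Dfun_atTop : Tendsto Dfun atTop (𝓝 0) := by
  have hpdf : Tendsto (fun z => stdPDF z / z) atTop (𝓝 0) :=
    tendsto_stdPDF_atTop.div_atTop tendsto_id
  have h := hpdf.sub (tendsto_stdCDF_atBot.comp tendsto_neg_atTop_atBot)
  rwa [sub_zero] at h

lemma tendsto_Dfun_nhdsGT_zero : Tendsto Dfun (𝓝[>] 0) atTop := by
  have hpdf : Tendsto (fun z => stdPDF z / z) (𝓝[>] 0) atTop :=
    Tendsto.pos_mul_atTop (stdPDF_pos 0) continuous_stdPDF.continuousWithinAt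
      tendsto_inv_nhdsGT_zero
  have hcdf : Tendsto (fun z => stdCDF (-z)) (𝓝[>] 0) (𝓝 (stdCDF (-0))) :=
    (continuous_stdCDF.comp continuous_neg).continuousWithinAt
  exact hpdf.atTop_add hcdf.neg

lemma Dfun_pos {z : ℝ} (hz : 0 < z) : 0 < Dfun z := by
  have hz1 : z + 1 ∈ Ioi (0 : ℝ) := mem_Ioi.2 (by linarith)
  have hnonneg : 0 ≤ Dfun (z + 1) :=
    le_of_tendsto tendsto_Dfun_atTop ((eventually_ge_atTop (z + 1)).mono fun w hw =>
      strictAntiOn_Dfun.antitoneOn hz1 (mem_Ioi.2 (hz1.out.trans_le hw)) hw)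
  exact hnonneg.trans_lt (strictAntiOn_Dfun hz hz1 (lt_add_one z))

lemma Dfun_le_exp {z : ℝ} (hz : 1 ≤ z) : Dfun z ≤ exp (-(z ^ 2) / 2) := by
  have hpi : 1 ≤ √(2 * π) := one_le_sqrt.2 (by linarith [pi_gt_three])
  calc Dfun z ≤ stdPDF z / z := sub_le_self _ (stdCDF_nonneg _)
    _ ≤ stdPDF z := div_le_self (stdPDF_pos z).le hz
    _ ≤ exp (-(z ^ 2) / 2) := div_le_self (exp_pos _).le hpi

lemma stdPDF_div_sq_le_Dfun {z : ℝ} (hz : 0 < z) : stdPDF (z + 1) / (z + 1) ^ 2 ≤ Dfun z := by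
  obtain ⟨c, ⟨hzc, hcz⟩, hslope⟩ := exists_hasDerivAt_eq_slope Dfun (fun t => -(stdPDF t / t ^ 2))
    (lt_add_one z) (continuousOn_Dfun.mono fun t ht => hz.trans_le ht.1)
    fun t ht => hasDerivAt_Dfun (hz.trans ht.1).ne'
  rw [add_sub_cancel_left, div_one] at hslope
  have hc : 0 < c := hz.trans hzc
  have hmono : stdPDF (z + 1) / (z + 1) ^ 2 ≤ stdPDF c / c ^ 2 :=
    div_le_div₀ (stdPDF_pos c).le (stdPDF_antitoneOn hc.le (mem_Ici.2 (by linarith)) hcz.le)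
      (pow_pos hc 2) (pow_le_pow_left₀ hc.le hcz.le 2)
  linarith [Dfun_pos (show 0 < z + 1 by linarith)]

lemma exp_le_Dfun {z : ℝ} (hz : 0 < z) : exp (-((z + 3) ^ 2) / 2) ≤ Dfun z := by
  have hpi : √(2 * π) ≤ exp 4 := calc
    √(2 * π) ≤ 4 := (sqrt_le_left (by norm_num)).2 (by linarith [pi_lt_four])
    _ ≤ exp 4 := by linarith [add_one_le_exp 4]
  have hsq : (z + 1) ^ 2 ≤ exp (2 * z) := by
    rw [mul_comm, exp_mul]
    exact_mod_cast pow_le_pow_left₀ (by linarith) (add_one_le_exp z) 2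
  refine le_trans ?_ (stdPDF_div_sq_le_Dfun hz)
  rw [stdPDF, div_div, le_div_iff₀ (by positivity)]
  calc exp (-((z + 3) ^ 2) / 2) * (√(2 * π) * (z + 1) ^ 2)
      ≤ exp (-((z + 3) ^ 2) / 2) * (exp 4 * exp (2 * z)) := by gcongr
    _ = exp (-((z + 1) ^ 2) / 2) := by rw [← exp_add, ← exp_add]; ring_nf

lemma sqrt_two_mul_neg_log_Dfun_mem_Icc {z : ℝ} (hz : 1 ≤ z) :
    √(2 * -log (Dfun z)) ∈ Icc z (z + 3) := by
  have hz0 : 0 < z := by linarith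
  have hD := Dfun_pos hz0
  have hlo := (log_le_iff_le_exp hD).2 (Dfun_le_exp hz)
  have hhi := (le_log_iff_exp_le hD).2 (exp_le_Dfun hz0)
  exact ⟨(le_sqrt' hz0).2 (by linarith), (sqrt_le_left (by linarith)).2 (by linarith)⟩

lemma tendsto_div_sqrt_two_mul_neg_log_Dfun :
    Tendsto (fun z => z / √(2 * -log (Dfun z))) atTop (𝓝 1) := by
  have hlow : Tendsto (fun z : ℝ => z / (z + 3)) atTop (𝓝 1) := by
    have h := (tendsto_const_nhds (x := (1 : ℝ)).add
      (tendsto_const_nhds (x := (3 : ℝ)).div_atTop tendsto_id)).inv₀ (by norm_num)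
    rw [add_zero, inv_one] at h
    refine h.congr' ((eventually_gt_atTop 0).mono fun z hz => ?_)
    rw [id]
    field_simp
  refine tendsto_of_tendsto_of_tendsto_of_le_of_le' hlow tendsto_const_nhds ?_ ?_
  all_goals filter_upwards [eventually_ge_atTop 1] with z hz
  all_goals obtain ⟨hlo, hhi⟩ := sqrt_two_mul_neg_log_Dfun_mem_Icc hz
  · exact div_le_div_of_nonneg_left (by linarith) (by linarith) hhi
  · exact div_le_one_of_le₀ hlo (sqrt_nonneg _)

lemma tendsto_mul_Dfun_nhdsGT_zero :
    Tendsto (fun z => √(2 * π) * z * Dfun z) (𝓝[>] 0) (𝓝 1) := by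
  have h : Tendsto (fun z => exp (-(z ^ 2) / 2) - √(2 * π) * z * stdCDF (-z)) (𝓝[>] 0)
      (𝓝 (exp (-(0 ^ 2) / 2) - √(2 * π) * 0 * stdCDF (-0))) :=
    (by fun_prop : Continuous _).continuousWithinAt
  rw [zero_pow two_ne_zero, neg_zero, zero_div, exp_zero, mul_zero, zero_mul, sub_zero] at h
  refine h.congr' (eventually_mem_nhdsWithin.mono fun z hz => ?_)
  have hz0 : z ≠ 0 := ne_of_gt hz
  have hpi : √(2 * π) ≠ 0 := by positivity
  simp only [Dfun, stdPDF]
  field_simp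

lemma surjOn_Dfun : SurjOn Dfun (Ioi 0) (Ioi 0) := by
  intro y (hy : 0 < y)
  obtain ⟨a, hya, ha⟩ : ∃ a, y < Dfun a ∧ 0 < a :=
    ((tendsto_Dfun_nhdsGT_zero.eventually_gt_atTop y).and self_mem_nhdsWithin).exists
  obtain ⟨b, hby, hab⟩ : ∃ b, Dfun b < y ∧ a < b :=
    ((tendsto_Dfun_atTop.eventually_lt_const hy).and (eventually_gt_atTop a)).exists
  obtain ⟨c, hc, hcy⟩ := intermediate_value_Ioo' hab.le
    (continuousOn_Dfun.mono fun t ht => ha.trans_le ht.1) ⟨hby, hya⟩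
  exact ⟨c, ha.trans hc.1, hcy⟩

lemma Dinv_pos {y : ℝ} (hy : 0 < y) : 0 < Dinv y :=
  surjOn_Dfun.mapsTo_invFunOn hy

lemma Dfun_Dinv {y : ℝ} (hy : 0 < y) : Dfun (Dinv y) = y :=
  surjOn_Dfun.rightInvOn_invFunOn hy

lemma lt_Dinv_iff {y z : ℝ} (hy : 0 < y) (hz : 0 < z) : z < Dinv y ↔ y < Dfun z := by
  rw [← strictAntiOn_Dfun.lt_iff_gt (Dinv_pos hy) hz, Dfun_Dinv hy]

lemma Dinv_lt_iff {y z : ℝ} (hy : 0 < y) (hz : 0 < z) : Dinv y < z ↔ Dfun z < y := by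
  rw [← strictAntiOn_Dfun.lt_iff_gt hz (Dinv_pos hy), Dfun_Dinv hy]

lemma tendsto_Dinv_nhdsGT_zero : Tendsto Dinv (𝓝[>] 0) atTop := by
  refine tendsto_atTop.2 fun M => ?_
  have hM : 0 < max M 1 := lt_max_of_lt_right one_pos
  filter_upwards [Ioo_mem_nhdsGT (Dfun_pos hM)] with y ⟨hy, hyM⟩
  exact (le_max_left M 1).trans ((lt_Dinv_iff hy hM).2 hyM).le

lemma tendsto_Dinv_atTop : Tendsto Dinv atTop (𝓝[>] 0) := by
  refine tendsto_nhdsWithin_iff.2 ⟨tendsto_order.2 ⟨fun b hb => ?_, fun c hc => ?_⟩, ?_⟩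
  · filter_upwards [eventually_gt_atTop 0] with y hy using hb.trans (Dinv_pos hy)
  · filter_upwards [eventually_gt_atTop (max (Dfun c) 0)] with y hy
    obtain ⟨hcy, hy⟩ := max_lt_iff.1 hy
    exact (Dinv_lt_iff hy hc).2 hcy
  · filter_upwards [eventually_gt_atTop 0] with y hy using Dinv_pos hy

/-- **Asymptotics of `D⁻¹`.** `D⁻¹(y) ~ √(2(-log y))` as `y → 0⁺` and
`D⁻¹(y) ~ 1/(√(2π) y)` as `y → ∞`. -/
theorem Dinv_asymptotics :
    Tendsto (fun y => Dinv y / Real.sqrt (2 * (-Real.log y))) (𝓝[>] 0) (𝓝 1) ∧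
    Tendsto (fun y => Real.sqrt (2 * Real.pi) * y * Dinv y) atTop (𝓝 1) := by
  refine ⟨(tendsto_div_sqrt_two_mul_neg_log_Dfun.comp tendsto_Dinv_nhdsGT_zero).congr' ?_,
    (tendsto_mul_Dfun_nhdsGT_zero.comp tendsto_Dinv_atTop).congr' ?_⟩
  · filter_upwards [self_mem_nhdsWithin] with y hy
    rw [Function.comp_apply, Dfun_Dinv hy]
  · filter_upwards [eventually_gt_atTop 0] with y hy
    rw [Function.comp_apply, Dfun_Dinv hy]
    ring
end

section
/- Fix Merton parameters μ ∈ ℝ, α ∈ ℝ, σ > 0, λ > 0, δ > 0, and for t > 0 let μ_t be the Merton log-return law, i.e. the mixture probability measure μ_t := e^{−λt} Σ_{n=0}^∞ ((λt)^n/n!) · N(μt + nα, σ²t + nδ²), where N(m, s²) denotes the Gaussian measure on ℝ with mean m and variance s². Let f(a) := min_{n ∈ ℕ, n ≥ 1} (n + a²/(2nδ²)). Then for every fixed a > 0 and every sequence t_k → 0 with t_k ∈ (0,1), one has log μ_{t_k}({x : x > a√(log(1/t_k))}) / (−f(a) log(1/t_k)) → 1 as k → ∞. -/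
open MeasureTheory Filter Topology

/-- The Merton log-return law at time `t > 0` with parameters `μ, α ∈ ℝ`,
`σ, λ, δ > 0`: the mixture `e^{-λt} Σ_{n≥0} ((λt)^n/n!) · N(μt + nα, σ²t + nδ²)`. -/
noncomputable def mertonLaw (μ α σ lam δ t : ℝ) : Measure ℝ :=
  Measure.sum (fun n : ℕ =>
    (ENNReal.ofReal (Real.exp (-(lam * t)) * (lam * t) ^ n / (n.factorial : ℝ))) •
      ProbabilityTheory.gaussianReal (μ * t + n * α) ((σ ^ 2 * t + n * δ ^ 2).toNNReal))

open Real ProbabilityTheory Asymptotics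
open scoped NNReal

/-! Write `L = log (1 / t)` and `c = a √L`. The `n`-th component of `μ_t` has Poisson weight
about `(λ t)ⁿ = λⁿ e^{-n L}` and, its variance tending to `n δ²`, Gaussian tail mass at `c`
about `exp (-a² L / (2 n δ²))`; for `n = 0` the variance `σ² t` vanishes and the tail is
negligible on this scale. So the `n`-th term decays like `exp (-(n + a² / (2 n δ²)) L)`. The
components with `n ≥ N ≥ f(a)` weigh at most `(λ t)^N` in total, so `μ_t (c, ∞)` decays at the
slowest of these rates, `f(a)`, which the minimising component alone already attains. -/

section LogRate

variable {S u L : ℕ → ℝ} {r : ℝ}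

theorem tendsto_neg_log_div_of_isBigO (hL : Tendsto L atTop atTop)
    (hlow : (fun k => exp (-u k)) =O[atTop] S) (hu : Tendsto (fun k => u k / L k) atTop (𝓝 r))
    (hup : ∀ ε > 0, S =O[atTop] fun k => exp (-(r - ε) * L k)) :
    Tendsto (fun k => -log (S k) / L k) atTop (𝓝 r) := by
  obtain ⟨C, hC, hlowC⟩ := hlow.exists_pos
  have hS : ∀ᶠ k in atTop, exp (-u k) ≤ C * |S k| := by
    filter_upwards [hlowC.bound] with k hk
    simpa [abs_of_pos (exp_pos _)] using hk
  have hS_pos : ∀ᶠ k in atTop, 0 < |S k| := by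
    filter_upwards [hS] with k hk
    exact pos_of_mul_pos_right ((exp_pos _).trans_le hk) hC.le
  have hL_pos := hL.eventually_gt_atTop 0
  refine tendsto_order.2 ⟨fun b hb => ?_, fun b hb => ?_⟩
  · obtain ⟨ε, hε, rfl⟩ : ∃ ε > 0, b = r - 2 * ε := ⟨(r - b) / 2, by linarith, by ring⟩
    obtain ⟨D, hD, hupD⟩ := (hup ε hε).exists_pos
    have hlogD : Tendsto (fun k => log D / L k) atTop (𝓝 0) := tendsto_const_nhds.div_atTop hL
    filter_upwards [hupD.bound, hS_pos, hL_pos, hlogD.eventually (gt_mem_nhds hε)]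
      with k hk hSk hLk hDk
    have hlogS : log |S k| ≤ log D - (r - ε) * L k := by
      have := log_le_log hSk (by simpa [abs_of_pos (exp_pos _)] using hk)
      rw [log_mul hD.ne' (exp_pos _).ne', log_exp] at this
      linarith
    rw [log_abs] at hlogS
    rw [lt_div_iff₀ hLk]
    nlinarith [(div_lt_iff₀ hLk).1 hDk]
  · have hlim : Tendsto (fun k => u k / L k + log C / L k) atTop (𝓝 r) := by
      simpa using hu.add (tendsto_const_nhds.div_atTop hL)
    filter_upwards [hS, hS_pos, hL_pos, hlim.eventually (gt_mem_nhds hb)] with k hk hSk hLk hlt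
    have hlogS : -log (S k) ≤ u k + log C := by
      have := log_le_log (exp_pos _) hk
      rw [log_exp, log_mul hC.ne' hSk.ne', log_abs] at this
      linarith
    calc -log (S k) / L k ≤ (u k + log C) / L k := div_le_div_of_nonneg_right hlogS hLk.le
      _ = u k / L k + log C / L k := add_div _ _ _
      _ < b := hlt

end LogRate

theorem tendsto_sq_add_div_self {L e : ℕ → ℝ} {E : ℝ} (a : ℝ) (hL : Tendsto L atTop atTop)
    (he : Tendsto e atTop (𝓝 E)) :
    Tendsto (fun k => (a * √(L k) + e k) ^ 2 / L k) atTop (𝓝 (a ^ 2)) := by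
  have h : Tendsto (fun k => (a + e k / √(L k)) ^ 2) atTop (𝓝 (a ^ 2)) := by
    simpa using (tendsto_const_nhds.add (he.div_atTop (tendsto_sqrt_atTop.comp hL))).pow 2
  refine h.congr' ?_
  filter_upwards [hL.eventually_gt_atTop 0] with k hk
  have := sqrt_pos.2 hk
  field_simp
  rw [sq_sqrt hk.le]
  ring

section GaussianTail

variable (m c : ℝ) {v : ℝ≥0}

/-- On `(c, ∞)` the density of `N(m, v)` is at most `exp (-(c - m)² / 2v)` times that of
`N(c, v)`, whose mass there is at most one. -/
theorem gaussianReal_Ioi_toReal_le (hv : v ≠ 0) (hmc : m ≤ c) :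
    (gaussianReal m v (Set.Ioi c)).toReal ≤ exp (-(c - m) ^ 2 / (2 * v)) := by
  have hv_pos : (0 : ℝ) < v := by positivity
  rw [gaussianReal_apply_eq_integral _ hv,
    ENNReal.toReal_ofReal (integral_nonneg fun x => gaussianPDFReal_nonneg _ _ _)]
  have hdensity : ∀ x ∈ Set.Ioi c,
      gaussianPDFReal m v x ≤ exp (-(c - m) ^ 2 / (2 * v)) * gaussianPDFReal c v x := by
    intro x hx
    rw [gaussianPDFReal, gaussianPDFReal, mul_left_comm]
    gcongr
    rw [← exp_add, exp_le_exp, ← add_div, div_le_div_iff_of_pos_right (by positivity)]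
    nlinarith [mul_nonneg (sub_nonneg.2 (le_of_lt hx)) (sub_nonneg.2 hmc)]
  calc ∫ x in Set.Ioi c, gaussianPDFReal m v x
      ≤ ∫ x in Set.Ioi c, exp (-(c - m) ^ 2 / (2 * v)) * gaussianPDFReal c v x :=
        setIntegral_mono_on (integrable_gaussianPDFReal _ _).restrict
          ((integrable_gaussianPDFReal _ _).const_mul _).restrict measurableSet_Ioi hdensity
    _ ≤ exp (-(c - m) ^ 2 / (2 * v)) * ∫ x, gaussianPDFReal c v x := by
        rw [integral_const_mul]
        gcongr ?_ * ?_
        exact setIntegral_le_integral (integrable_gaussianPDFReal _ _)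
          (ae_of_all _ (gaussianPDFReal_nonneg _ _))
    _ = exp (-(c - m) ^ 2 / (2 * v)) := by rw [integral_gaussianPDFReal_eq_one c hv, mul_one]

/-- The density of `N(m, v)` on `(c, c + √v]` is at least its value at `c + √v`. -/
theorem exp_div_sqrt_two_pi_le_gaussianReal_Ioi_toReal (hv : v ≠ 0) (hmc : m ≤ c) :
    exp (-(c + √v - m) ^ 2 / (2 * v)) / √(2 * π) ≤ (gaussianReal m v (Set.Ioi c)).toReal := by
  have hv_pos : (0 : ℝ) < v := by positivity
  have hsqrt_pos : 0 < √(v : ℝ) := sqrt_pos.2 hv_pos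
  refine le_trans ?_ (ENNReal.toReal_mono (measure_ne_top _ _)
    (measure_mono (Set.Ioc_subset_Ioi_self : Set.Ioc c (c + √v) ⊆ _)))
  rw [gaussianReal_apply_eq_integral _ hv,
    ENNReal.toReal_ofReal (integral_nonneg fun x => gaussianPDFReal_nonneg _ _ _)]
  have hdensity : ∀ x ∈ Set.Ioc c (c + √v),
      gaussianPDFReal m v (c + √v) ≤ gaussianPDFReal m v x := by
    rintro x ⟨hcx, hxc⟩
    rw [gaussianPDFReal, gaussianPDFReal]
    gcongr
    linarith
  calc exp (-(c + √v - m) ^ 2 / (2 * v)) / √(2 * π)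
      = (volume (Set.Ioc c (c + √v))).toReal • gaussianPDFReal m v (c + √v) := by
        rw [Real.volume_Ioc, add_sub_cancel_left, ENNReal.toReal_ofReal hsqrt_pos.le, smul_eq_mul,
          gaussianPDFReal, sqrt_mul' _ hv_pos.le]
        field_simp
    _ = ∫ _ in Set.Ioc c (c + √v), gaussianPDFReal m v (c + √v) := (setIntegral_const _).symm
    _ ≤ ∫ x in Set.Ioc c (c + √v), gaussianPDFReal m v x :=
        setIntegral_mono_on (integrableOn_const measure_Ioc_lt_top.ne)
          (integrable_gaussianPDFReal _ _).restrict measurableSet_Ioc hdensity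

end GaussianTail

section PoissonWeight

variable {x : ℝ}

noncomputable def poissonWeight (x : ℝ) (n : ℕ) : ℝ := exp (-x) * x ^ n / n.factorial

theorem poissonWeight_nonneg (hx : 0 ≤ x) (n : ℕ) : 0 ≤ poissonWeight x n := by
  unfold poissonWeight; positivity

theorem hasSum_poissonWeight (hx : 0 ≤ x) : HasSum (poissonWeight x) 1 :=
  hasSum_one_poissonMeasure ⟨x, hx⟩

theorem poissonWeight_le_pow (hx : 0 ≤ x) (n : ℕ) : poissonWeight x n ≤ x ^ n := by
  unfold poissonWeight
  rw [div_le_iff₀ (by positivity)]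
  have : exp (-x) ≤ 1 := exp_le_one_iff.2 (neg_nonpos.2 hx)
  have : (1 : ℝ) ≤ n.factorial := by exact_mod_cast n.factorial_pos
  nlinarith [pow_nonneg hx n]

theorem poissonWeight_add_le (hx : 0 ≤ x) (n N : ℕ) :
    poissonWeight x (n + N) ≤ x ^ N * poissonWeight x n := by
  unfold poissonWeight
  rw [pow_add, mul_div_assoc', div_le_div_iff₀ (by positivity) (by positivity)]
  have : (n.factorial : ℝ) ≤ (n + N).factorial := by exact_mod_cast Nat.factorial_le (by omega)
  have : 0 ≤ exp (-x) * (x ^ n * x ^ N) := by positivity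
  nlinarith

theorem tsum_poissonWeight_mul_le (hx : 0 ≤ x) {g : ℕ → ℝ} (hg₀ : ∀ n, 0 ≤ g n)
    (hg₁ : ∀ n, g n ≤ 1) (N : ℕ) :
    ∑' n, poissonWeight x n * g n ≤ ∑ n ∈ Finset.range N, x ^ n * g n + x ^ N := by
  have hsum : Summable fun n => poissonWeight x n * g n :=
    (hasSum_poissonWeight hx).summable.of_nonneg_of_le
      (fun n => mul_nonneg (poissonWeight_nonneg hx n) (hg₀ n))
      (fun n => mul_le_of_le_one_right (poissonWeight_nonneg hx n) (hg₁ n))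
  rw [← hsum.sum_add_tsum_nat_add N]
  refine add_le_add (Finset.sum_le_sum fun n _ => ?_) ?_
  · exact mul_le_mul_of_nonneg_right (poissonWeight_le_pow hx n) (hg₀ n)
  · calc ∑' n, poissonWeight x (n + N) * g (n + N)
        ≤ ∑' n, x ^ N * poissonWeight x n :=
          ((_root_.summable_nat_add_iff N).2 hsum).tsum_le_tsum
            (fun n => (mul_le_of_le_one_right (poissonWeight_nonneg hx _) (hg₁ _)).trans
              (poissonWeight_add_le hx n N))
            ((hasSum_poissonWeight hx).summable.mul_left _)
      _ = x ^ N := by rw [_root_.tsum_mul_left, (hasSum_poissonWeight hx).tsum_eq, mul_one]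

end PoissonWeight

section MertonLaw

variable (μ α σ lam δ : ℝ)

def mertonMean (t : ℝ) (n : ℕ) : ℝ := μ * t + n * α

def mertonVar (t : ℝ) (n : ℕ) : ℝ := σ ^ 2 * t + n * δ ^ 2

variable {μ α σ lam δ} {t c : ℝ}

theorem mertonLaw_apply_toReal (ht : 0 ≤ lam * t) {s : Set ℝ} (hs : MeasurableSet s) :
    (mertonLaw μ α σ lam δ t s).toReal = ∑' n, poissonWeight (lam * t) n *
      (gaussianReal (mertonMean μ α t n) (mertonVar σ δ t n).toNNReal s).toReal := by
  rw [mertonLaw, Measure.sum_apply _ hs]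
  simp only [Measure.smul_apply, smul_eq_mul]
  rw [ENNReal.tsum_toReal_eq fun n => ENNReal.mul_ne_top ENNReal.ofReal_ne_top (measure_ne_top _ _)]
  refine tsum_congr fun n => ?_
  rw [ENNReal.toReal_mul]
  exact congrArg (· * _) (ENNReal.toReal_ofReal (poissonWeight_nonneg ht n))

theorem poissonWeight_mul_le_mertonLaw_Ioi (ht : 0 ≤ lam * t) {m : ℕ}
    (hv : 0 < mertonVar σ δ t m) (hc : mertonMean μ α t m ≤ c) :
    poissonWeight (lam * t) m * (exp (-(c + √(mertonVar σ δ t m) - mertonMean μ α t m) ^ 2 /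
      (2 * mertonVar σ δ t m)) / √(2 * π)) ≤ (mertonLaw μ α σ lam δ t (Set.Ioi c)).toReal := by
  have hsum : Summable fun n => poissonWeight (lam * t) n *
      (gaussianReal (mertonMean μ α t n) (mertonVar σ δ t n).toNNReal (Set.Ioi c)).toReal :=
    (hasSum_poissonWeight ht).summable.of_nonneg_of_le
      (fun n => mul_nonneg (poissonWeight_nonneg ht n) ENNReal.toReal_nonneg)
      (fun n => mul_le_of_le_one_right (poissonWeight_nonneg ht n) measureReal_le_one)
  rw [mertonLaw_apply_toReal ht measurableSet_Ioi]
  refine le_trans ?_ (hsum.le_tsum m fun n _ =>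
    mul_nonneg (poissonWeight_nonneg ht n) ENNReal.toReal_nonneg)
  refine mul_le_mul_of_nonneg_left ?_ (poissonWeight_nonneg ht m)
  have := exp_div_sqrt_two_pi_le_gaussianReal_Ioi_toReal _ _
    (Real.toNNReal_pos.2 hv).ne' hc
  rwa [Real.coe_toNNReal _ hv.le] at this

theorem mertonLaw_Ioi_le_sum_add_pow (ht : 0 ≤ lam * t) {N : ℕ}
    (hv : ∀ n < N, 0 < mertonVar σ δ t n) (hc : ∀ n < N, mertonMean μ α t n ≤ c) :
    (mertonLaw μ α σ lam δ t (Set.Ioi c)).toReal ≤ ∑ n ∈ Finset.range N, (lam * t) ^ n *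
      exp (-(c - mertonMean μ α t n) ^ 2 / (2 * mertonVar σ δ t n)) + (lam * t) ^ N := by
  rw [mertonLaw_apply_toReal ht measurableSet_Ioi]
  refine (tsum_poissonWeight_mul_le ht (fun n => ENNReal.toReal_nonneg)
    (fun n => measureReal_le_one) N).trans ?_
  gcongr with n hn
  have hn := Finset.mem_range.1 hn
  have := gaussianReal_Ioi_toReal_le _ _ (Real.toNNReal_pos.2 (hv n hn)).ne' (hc n hn)
  rwa [Real.coe_toNNReal _ (hv n hn).le] at this

end MertonLaw

section MertonAsymptotics

noncomputable def mertonRate (δ a : ℝ) (n : ℕ) : ℝ := n + a ^ 2 / (2 * n * δ ^ 2)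

variable {μ α σ lam δ a : ℝ} {t L : ℕ → ℝ}

theorem mertonVar_pos (hσ : σ ≠ 0) {s : ℝ} (hs : 0 < s) (n : ℕ) : 0 < mertonVar σ δ s n := by
  unfold mertonVar; positivity

theorem tendsto_mertonMean (ht0 : Tendsto t atTop (𝓝 0)) (n : ℕ) :
    Tendsto (fun k => mertonMean μ α (t k) n) atTop (𝓝 (n * α)) := by
  simpa [mertonMean] using (ht0.const_mul μ).add_const ((n : ℝ) * α)

theorem tendsto_mertonVar (ht0 : Tendsto t atTop (𝓝 0)) (n : ℕ) :
    Tendsto (fun k => mertonVar σ δ (t k) n) atTop (𝓝 (n * δ ^ 2)) := by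
  simpa [mertonVar] using (ht0.const_mul (σ ^ 2)).add_const ((n : ℝ) * δ ^ 2)

theorem eventually_mertonMean_le (ha : 0 < a) (hL : Tendsto L atTop atTop)
    (ht0 : Tendsto t atTop (𝓝 0)) (n : ℕ) :
    ∀ᶠ k in atTop, mertonMean μ α (t k) n ≤ a * √(L k) := by
  filter_upwards [(tendsto_mertonMean ht0 n).eventually (gt_mem_nhds (lt_add_one _)),
    ((tendsto_sqrt_atTop.comp hL).const_mul_atTop ha).eventually_ge_atTop ((n : ℝ) * α + 1)]
    with k hmean hc
  exact hmean.le.trans hc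

theorem tendsto_sq_add_div_mertonVar_div {e : ℕ → ℝ} {E : ℝ} (hδ : δ ≠ 0)
    (hL : Tendsto L atTop atTop) (ht0 : Tendsto t atTop (𝓝 0)) (he : Tendsto e atTop (𝓝 E))
    {n : ℕ} (hn : n ≠ 0) :
    Tendsto (fun k => (a * √(L k) + e k) ^ 2 / (2 * mertonVar σ δ (t k) n) / L k) atTop
      (𝓝 (a ^ 2 / (2 * n * δ ^ 2))) := by
  simp only [div_right_comm _ _ (L _), mul_assoc 2 (n : ℝ)]
  exact (tendsto_sq_add_div_self a hL he).div ((tendsto_mertonVar ht0 n).const_mul 2)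
    (by positivity)

theorem tendsto_sq_add_div_mertonVar_zero_div_atTop {e : ℕ → ℝ} {E : ℝ} (hσ : σ ≠ 0)
    (ha : a ≠ 0) (hL : Tendsto L atTop atTop) (ht0 : Tendsto t atTop (𝓝 0))
    (htpos : ∀ k, 0 < t k) (he : Tendsto e atTop (𝓝 E)) :
    Tendsto (fun k => (a * √(L k) + e k) ^ 2 / (2 * mertonVar σ δ (t k) 0) / L k) atTop
      atTop := by
  have hvar : Tendsto (fun k => 2 * mertonVar σ δ (t k) 0) atTop (𝓝[>] 0) :=
    tendsto_nhdsWithin_iff.2 ⟨by simpa using (tendsto_mertonVar ht0 0).const_mul 2,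
      Eventually.of_forall fun k => mul_pos two_pos (mertonVar_pos hσ (htpos k) 0)⟩
  refine ((tendsto_sq_add_div_self a hL he).pos_mul_atTop (by positivity)
    (tendsto_inv_nhdsGT_zero.comp hvar)).congr fun k => ?_
  rw [Function.comp_apply, ← div_eq_mul_inv, div_right_comm]

theorem tendsto_nhds_zero_of_eq_exp_neg (htL : ∀ k, t k = exp (-L k))
    (hL : Tendsto L atTop atTop) : Tendsto t atTop (𝓝 0) :=
  (tendsto_exp_neg_atTop_nhds_zero.comp hL).congr fun k => (htL k).symm

theorem isBigO_pow_mul_exp_neg (htL : ∀ k, t k = exp (-L k)) {q : ℕ → ℝ} {ρ : ℝ} (n : ℕ)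
    (hq : ∀ᶠ k in atTop, ρ * L k ≤ q k) :
    (fun k => (lam * t k) ^ n * exp (-q k)) =O[atTop] fun k => exp (-(n + ρ) * L k) := by
  refine IsBigO.of_bound (|lam| ^ n) ?_
  filter_upwards [hq] with k hk
  rw [htL k, mul_pow, ← exp_nat_mul, mul_assoc, ← exp_add, norm_mul, norm_pow,
    Real.norm_eq_abs, Real.norm_eq_abs, Real.norm_eq_abs, abs_exp, abs_exp]
  gcongr
  linarith

theorem isBigO_exp_neg_mertonLaw_Ioi (hσ : σ ≠ 0) (hlam : 0 < lam) (ha : 0 < a)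
    (htL : ∀ k, t k = exp (-L k)) (hL : Tendsto L atTop atTop) (m : ℕ) :
    (fun k => exp (-(m * L k + (a * √(L k) + √(mertonVar σ δ (t k) m) -
        mertonMean μ α (t k) m) ^ 2 / (2 * mertonVar σ δ (t k) m))))
      =O[atTop] fun k => (mertonLaw μ α σ lam δ (t k) (Set.Ioi (a * √(L k)))).toReal := by
  refine IsBigO.of_bound (exp lam * m.factorial * √(2 * π) / lam ^ m) ?_
  filter_upwards [eventually_mertonMean_le (μ := μ) (α := α) ha hL
    (tendsto_nhds_zero_of_eq_exp_neg htL hL) m, hL.eventually_ge_atTop 0] with k hmean hLk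
  have htpos : 0 < t k := htL k ▸ exp_pos _
  have ht1 : t k ≤ 1 := htL k ▸ exp_le_one_iff.2 (neg_nonpos.2 hLk)
  have hweight : exp (-lam) * lam ^ m / m.factorial * exp (-(m * L k)) ≤
      poissonWeight (lam * t k) m := by
    have htm : t k ^ m = exp (-(m * L k)) := by rw [htL k, ← exp_nat_mul, mul_neg]
    rw [poissonWeight, mul_pow, htm, div_mul_eq_mul_div, mul_assoc]
    gcongr
    nlinarith
  rw [norm_of_nonneg (exp_pos _).le, norm_of_nonneg ENNReal.toReal_nonneg]
  refine le_trans ?_ (mul_le_mul_of_nonneg_left (poissonWeight_mul_le_mertonLaw_Ioi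
    (mul_pos hlam htpos).le (mertonVar_pos hσ htpos m) hmean) (by positivity))
  calc exp (-(m * L k + (a * √(L k) + √(mertonVar σ δ (t k) m) -
        mertonMean μ α (t k) m) ^ 2 / (2 * mertonVar σ δ (t k) m)))
      = exp lam * m.factorial * √(2 * π) / lam ^ m *
          (exp (-lam) * lam ^ m / m.factorial * exp (-(m * L k)) *
          (exp (-(a * √(L k) + √(mertonVar σ δ (t k) m) - mertonMean μ α (t k) m) ^ 2 /
            (2 * mertonVar σ δ (t k) m)) / √(2 * π))) := by
        rw [exp_neg lam, neg_add, exp_add, neg_div]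
        field_simp
    _ ≤ _ := by gcongr

theorem eventually_mul_le_gaussianExponent (hσ : σ ≠ 0) (hδ : δ ≠ 0) (ha : 0 < a)
    (htL : ∀ k, t k = exp (-L k)) (hL : Tendsto L atTop atTop) {r : ℝ}
    (hr : ∀ n ≠ 0, r ≤ mertonRate δ a n) {ε : ℝ} (hε : 0 < ε) (n : ℕ) :
    ∀ᶠ k in atTop, (r - ε - n) * L k ≤
      (a * √(L k) - mertonMean μ α (t k) n) ^ 2 / (2 * mertonVar σ δ (t k) n) := by
  have ht0 := tendsto_nhds_zero_of_eq_exp_neg htL hL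
  have he := (tendsto_mertonMean (μ := μ) (α := α) ht0 n).neg
  have hlim : ∀ᶠ k in atTop, r - ε - n <
      (a * √(L k) + -mertonMean μ α (t k) n) ^ 2 / (2 * mertonVar σ δ (t k) n) / L k := by
    rcases eq_or_ne n 0 with rfl | hn
    · exact (tendsto_sq_add_div_mertonVar_zero_div_atTop hσ ha.ne' hL ht0
        (fun k => htL k ▸ exp_pos _) he).eventually_gt_atTop _
    · refine (tendsto_sq_add_div_mertonVar_div hδ hL ht0 he hn).eventually (lt_mem_nhds ?_)
      linarith [hr n hn, show mertonRate δ a n = n + a ^ 2 / (2 * n * δ ^ 2) from rfl]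
  filter_upwards [hlim, hL.eventually_gt_atTop 0] with k hk hLk
  rw [sub_eq_add_neg]
  exact ((lt_div_iff₀ hLk).1 hk).le

theorem isBigO_mertonLaw_Ioi_exp_neg (hσ : σ ≠ 0) (hlam : 0 ≤ lam) (hδ : δ ≠ 0) (ha : 0 < a)
    (htL : ∀ k, t k = exp (-L k)) (hL : Tendsto L atTop atTop) {r : ℝ}
    (hr : ∀ n ≠ 0, r ≤ mertonRate δ a n) {ε : ℝ} (hε : 0 < ε) :
    (fun k => (mertonLaw μ α σ lam δ (t k) (Set.Ioi (a * √(L k)))).toReal)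
      =O[atTop] fun k => exp (-(r - ε) * L k) := by
  have htpos : ∀ k, 0 < t k := fun k => htL k ▸ exp_pos _
  have ht0 := tendsto_nhds_zero_of_eq_exp_neg htL hL
  set N := ⌈r⌉₊
  have hmean : ∀ᶠ k in atTop, ∀ n ∈ Finset.range N, mertonMean μ α (t k) n ≤ a * √(L k) :=
    (Finset.eventually_all _).2 fun n _ => eventually_mertonMean_le ha hL ht0 n
  have hsplit : (fun k => (mertonLaw μ α σ lam δ (t k) (Set.Ioi (a * √(L k)))).toReal)
      =O[atTop] fun k => ∑ n ∈ Finset.range N, (lam * t k) ^ n *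
        exp (-(a * √(L k) - mertonMean μ α (t k) n) ^ 2 / (2 * mertonVar σ δ (t k) n)) +
          (lam * t k) ^ N := by
    refine IsBigO.of_bound' ?_
    filter_upwards [hmean] with k hk
    rw [norm_of_nonneg ENNReal.toReal_nonneg]
    exact (mertonLaw_Ioi_le_sum_add_pow (mul_nonneg hlam (htpos k).le)
      (fun n _ => mertonVar_pos hσ (htpos k) n)
      (fun n hn => hk n (Finset.mem_range.2 hn))).trans (le_abs_self _)
  refine hsplit.trans (IsBigO.add (IsBigO.fun_sum fun n _ => ?_) ?_)
  · exact (isBigO_pow_mul_exp_neg htL n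
      (eventually_mul_le_gaussianExponent hσ hδ ha htL hL hr hε n)).congr
      (fun k => by rw [neg_div]) (fun k => by rw [add_sub_cancel])
  · have hq : ∀ᶠ k in atTop, (r - ε - N) * L k ≤ 0 := by
      filter_upwards [hL.eventually_ge_atTop 0] with k hLk
      exact mul_nonpos_of_nonpos_of_nonneg (by linarith [Nat.le_ceil r]) hLk
    exact (isBigO_pow_mul_exp_neg (q := fun _ => 0) htL N hq).congr
      (fun k => by rw [neg_zero, exp_zero, mul_one]) (fun k => by rw [add_sub_cancel])

theorem tendsto_natCast_mul_add_gaussianExponent_div (hδ : δ ≠ 0) (hL : Tendsto L atTop atTop)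
    (ht0 : Tendsto t atTop (𝓝 0)) {m : ℕ} (hm : m ≠ 0) :
    Tendsto (fun k => (m * L k + (a * √(L k) + √(mertonVar σ δ (t k) m) -
        mertonMean μ α (t k) m) ^ 2 / (2 * mertonVar σ δ (t k) m)) / L k) atTop
      (𝓝 (mertonRate δ a m)) := by
  have he := (tendsto_mertonVar (σ := σ) (δ := δ) ht0 m).sqrt.sub
    (tendsto_mertonMean (μ := μ) (α := α) ht0 m)
  refine ((tendsto_sq_add_div_mertonVar_div (σ := σ) hδ hL ht0 he hm).const_add (m : ℝ)).congr' ?_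
  filter_upwards [hL.eventually_gt_atTop 0] with k hLk
  rw [add_div, mul_div_cancel_right₀ _ hLk.ne', add_sub_assoc]

theorem tendsto_neg_log_mertonLaw_Ioi_div (hσ : σ ≠ 0) (hlam : 0 < lam) (hδ : δ ≠ 0)
    (ha : 0 < a) (htL : ∀ k, t k = exp (-L k)) (hL : Tendsto L atTop atTop) {m : ℕ}
    (hm : m ≠ 0) (hmin : ∀ n ≠ 0, mertonRate δ a m ≤ mertonRate δ a n) :
    Tendsto (fun k => -log (mertonLaw μ α σ lam δ (t k) (Set.Ioi (a * √(L k)))).toReal / L k)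
      atTop (𝓝 (mertonRate δ a m)) :=
  tendsto_neg_log_div_of_isBigO hL (isBigO_exp_neg_mertonLaw_Ioi hσ hlam ha htL hL m)
    (tendsto_natCast_mul_add_gaussianExponent_div hδ hL
      (tendsto_nhds_zero_of_eq_exp_neg htL hL) hm)
    fun _ hε => isBigO_mertonLaw_Ioi_exp_neg hσ hlam.le hδ ha htL hL hmin hε

end MertonAsymptotics

theorem exists_mertonRate_eq_iInf (δ a : ℝ) :
    ∃ m ≠ 0, (∀ n ≠ 0, mertonRate δ a m ≤ mertonRate δ a n) ∧
      ⨅ n : ℕ, mertonRate δ a (n + 1) = mertonRate δ a m := by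
  have hge : ∀ n : ℕ, (n : ℝ) ≤ mertonRate δ a n := fun n =>
    le_add_of_nonneg_right (by positivity)
  have htend : Tendsto (fun n : ℕ => mertonRate δ a (n + 1)) cofinite atTop := by
    rw [Nat.cofinite_eq_atTop]
    exact tendsto_atTop_mono (fun n => hge (n + 1))
      (tendsto_natCast_atTop_atTop.comp (tendsto_add_atTop_nat 1))
  obtain ⟨m, hm⟩ := htend.exists_forall_le
  refine ⟨m + 1, m.succ_ne_zero, fun n hn => ?_, ?_⟩
  · obtain ⟨j, rfl⟩ := Nat.exists_eq_succ_of_ne_zero hn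
    exact hm j
  · exact le_antisymm (ciInf_le ⟨0, by rintro _ ⟨n, rfl⟩; exact (hge _).trans' (by positivity)⟩ m)
      (le_ciInf hm)

/-- **Merton model, tail asymptotics at scale `κ = a √(log(1/t))`.**
For `f(a) = min_{n ≥ 1} (n + a²/(2nδ²))` and any fixed `a > 0`, along any sequence
`t_k → 0` with `t_k ∈ (0,1)`, one has
`log μ_{t_k}(x > a √(log(1/t_k))) ~ -f(a) log(1/t_k)`. -/
theorem merton_tail_scale_sqrt_log
    (μ α σ lam δ : ℝ) (hσ : 0 < σ) (hlam : 0 < lam) (hδ : 0 < δ)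
    (f : ℝ → ℝ)
    (hf : ∀ a : ℝ, f a = ⨅ n : ℕ, ((n : ℝ) + 1 + a ^ 2 / (2 * ((n : ℝ) + 1) * δ ^ 2)))
    (a : ℝ) (ha : 0 < a)
    (t : ℕ → ℝ) (ht : ∀ k, 0 < t k ∧ t k < 1)
    (ht0 : Tendsto t atTop (𝓝 0)) :
    Tendsto (fun k =>
        Real.log (((mertonLaw μ α σ lam δ (t k))
            {x : ℝ | a * Real.sqrt (Real.log (1 / t k)) < x}).toReal) /
          (-(f a) * Real.log (1 / t k)))
      atTop (𝓝 1) := by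
  obtain ⟨m, hm, hmin, hinf⟩ := exists_mertonRate_eq_iInf δ a
  have hfa : f a = mertonRate δ a m := by
    rw [hf a, ← hinf]
    simp [mertonRate]
  have hfa_pos : 0 < f a := hfa ▸ lt_add_of_pos_of_le (by positivity) (by positivity)
  have htL : ∀ k, t k = exp (-log (1 / t k)) := fun k => by
    rw [one_div, log_inv, neg_neg, exp_log (ht k).1]
  have hL : Tendsto (fun k => log (1 / t k)) atTop atTop := by
    have := tendsto_log_nhdsGT_zero.comp
      (tendsto_nhdsWithin_iff.2 ⟨ht0, Eventually.of_forall fun k => (ht k).1⟩)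
    refine (tendsto_neg_atBot_atTop.comp this).congr fun k => ?_
    rw [Function.comp_apply, Function.comp_apply, one_div, log_inv]
  have hrate := (tendsto_neg_log_mertonLaw_Ioi_div (μ := μ) (α := α) hσ.ne' hlam hδ.ne' ha htL
    hL hm hmin).div_const (f a)
  rw [← hfa, div_self hfa_pos.ne'] at hrate
  refine hrate.congr fun k => ?_
  rw [div_div, neg_div, ← div_neg, neg_mul, mul_comm (log (1 / t k)) (f a)]
  rfl
end

section
/- Fix Heston parameters λ > 0, η > 0 and ρ with −1 < ρ < 1 and ρ ≠ 0. Define χ(p) := ρηp − λ and Δ(p) := χ(p)² − η²(p² − p). Then Δ(p) < 0 for all sufficiently large p, and the explosion-time function T*(p) := (2/√(−Δ(p))) · (arctan(√(−Δ(p))/χ(p)) + π·1_{χ(p)<0}) satisfies p · T*(p) → C as p → ∞, where C := (2/(η√(1−ρ²))) · (arctan(√(1−ρ²)/ρ) + π·1_{ρ<0}). -/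
/-!
With `F(s, c) = (2/s) (arctan(s/c) + π·1_{c<0})` we have `T*(p) = F(√(-Δ(p)), χ(p))`, and `F` is
homogeneous of degree `-1` under scaling by `t > 0`, so `p · T*(p) = F(√(-Δ(p))/p, χ(p)/p)`.
Since `χ(p)/p → ρη` and `Δ(p)/p² → -η²(1-ρ²)`, these arguments tend to `(η√(1-ρ²), ρη)`; both
coordinates are non-zero there, where `F` is continuous, and `F(η√(1-ρ²), ρη) = C`.
-/
open Filter Topology

noncomputable def explosionTime (s c : ℝ) : ℝ :=
  2 / s * (Real.arctan (s / c) + Real.pi * if c < 0 then 1 else 0)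

theorem explosionTime_div {t : ℝ} (ht : 0 < t) (s c : ℝ) :
    explosionTime (s / t) (c / t) = t * explosionTime s c := by
  have hsign : (if c / t < 0 then (1 : ℝ) else 0) = if c < 0 then 1 else 0 := by
    simp only [div_lt_iff₀ ht, zero_mul]
  rw [explosionTime, explosionTime, hsign, div_div_div_cancel_right₀ ht.ne', div_div_eq_mul_div]
  ring

theorem Filter.Tendsto.eventually_lt_zero_iff {α : Type*} {l : Filter α} {g : α → ℝ} {c : ℝ}
    (hg : Tendsto g l (𝓝 c)) (hc : c ≠ 0) : ∀ᶠ x in l, (g x < 0 ↔ c < 0) := by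
  rcases hc.lt_or_gt with hc | hc
  · filter_upwards [hg.eventually_lt_const hc] with x hx
    simp [hx, hc]
  · filter_upwards [hg.eventually_const_lt hc] with x hx
    simp [hx.not_gt, hc.not_gt]

theorem Filter.Tendsto.explosionTime {α : Type*} {l : Filter α} {f g : α → ℝ} {s c : ℝ}
    (hf : Tendsto f l (𝓝 s)) (hg : Tendsto g l (𝓝 c)) (hs : s ≠ 0) (hc : c ≠ 0) :
    Tendsto (fun x => explosionTime (f x) (g x)) l (𝓝 (explosionTime s c)) := by
  have hlim := ((tendsto_const_nhds (x := 2)).div hf hs).mul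
    (((Real.continuous_arctan.tendsto _).comp (hf.div hg hc)).add
      (tendsto_const_nhds (x := Real.pi * if c < 0 then 1 else 0)))
  refine hlim.congr' ?_
  filter_upwards [hg.eventually_lt_zero_iff hc] with x hx
  simp only [_root_.explosionTime, hx, Function.comp_apply, Pi.div_apply]

theorem tendsto_mul_sub_div_atTop (a b : ℝ) :
    Tendsto (fun p => (a * p - b) / p) atTop (𝓝 a) := by
  have hlim : Tendsto (fun p : ℝ => a - b / p) atTop (𝓝 (a - 0)) :=
    tendsto_const_nhds.sub (tendsto_const_nhds.div_atTop tendsto_id)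
  rw [sub_zero] at hlim
  refine hlim.congr' ?_
  filter_upwards [eventually_ne_atTop 0] with p hp
  field_simp

theorem tendsto_sq_sub_div_sq_atTop {χ : ℝ → ℝ} {a : ℝ}
    (hχ : Tendsto (fun p => χ p / p) atTop (𝓝 a)) (b : ℝ) :
    Tendsto (fun p => (χ p ^ 2 - b * (p ^ 2 - p)) / p ^ 2) atTop (𝓝 (a ^ 2 - b)) := by
  have hlim : Tendsto (fun p : ℝ => (χ p / p) ^ 2 - b * (1 - p⁻¹)) atTop
      (𝓝 (a ^ 2 - b * (1 - 0))) :=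
    (hχ.pow 2).sub (tendsto_const_nhds.mul (tendsto_const_nhds.sub tendsto_inv_atTop_zero))
  rw [sub_zero, mul_one] at hlim
  refine hlim.congr' ?_
  filter_upwards [eventually_ne_atTop 0] with p hp
  field_simp

theorem tendsto_sqrt_div_atTop_of_tendsto_div_sq {f : ℝ → ℝ} {L : ℝ}
    (hf : Tendsto (fun p => f p / p ^ 2) atTop (𝓝 L)) :
    Tendsto (fun p => √(f p) / p) atTop (𝓝 √L) := by
  refine ((Real.continuous_sqrt.tendsto L).comp hf).congr' ?_
  filter_upwards [eventually_ge_atTop 0] with p hp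
  rw [Function.comp_apply, Real.sqrt_div' _ (sq_nonneg p), Real.sqrt_sq hp]

theorem heston_explosion_time_asymptotics_general
    (lam η ρ : ℝ) (hη : 0 < η)
    (hρ1 : -1 < ρ) (hρ2 : ρ < 1) (hρ0 : ρ ≠ 0)
    (χ Δ Tstar : ℝ → ℝ)
    (hχ : ∀ p, χ p = ρ * η * p - lam)
    (hΔ : ∀ p, Δ p = (χ p) ^ 2 - η ^ 2 * (p ^ 2 - p))
    (hT : ∀ p, Tstar p = 2 / Real.sqrt (-(Δ p)) *
        (Real.arctan (Real.sqrt (-(Δ p)) / χ p) + Real.pi * (if χ p < 0 then 1 else 0))) :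
    (∀ᶠ p in atTop, Δ p < 0) ∧
    Tendsto (fun p => p * Tstar p) atTop
      (𝓝 (2 / (η * Real.sqrt (1 - ρ ^ 2)) *
        (Real.arctan (Real.sqrt (1 - ρ ^ 2) / ρ) + Real.pi * (if ρ < 0 then 1 else 0)))) := by
  have h1ρ : 0 < 1 - ρ ^ 2 := by nlinarith
  have hχlim : Tendsto (fun p => χ p / p) atTop (𝓝 (ρ * η)) := by
    simpa only [hχ] using tendsto_mul_sub_div_atTop (ρ * η) lam
  have hΔlim : Tendsto (fun p => -Δ p / p ^ 2) atTop (𝓝 (η ^ 2 * (1 - ρ ^ 2))) := by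
    have hlim := (tendsto_sq_sub_div_sq_atTop hχlim (η ^ 2)).neg
    rw [show -((ρ * η) ^ 2 - η ^ 2) = η ^ 2 * (1 - ρ ^ 2) by ring] at hlim
    simpa only [hΔ, neg_div] using hlim
  have hslim : Tendsto (fun p => √(-Δ p) / p) atTop (𝓝 (η * √(1 - ρ ^ 2))) := by
    rw [← Real.sqrt_sq hη.le, ← Real.sqrt_mul (sq_nonneg η)]
    exact tendsto_sqrt_div_atTop_of_tendsto_div_sq hΔlim
  constructor
  · filter_upwards [hΔlim.eventually_const_lt (by positivity), eventually_gt_atTop 0]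
      with p hp hp0
    rw [lt_div_iff₀ (by positivity), zero_mul] at hp
    linarith
  · have hlim := hslim.explosionTime hχlim (by positivity) (mul_ne_zero hρ0 hη.ne')
    have hC : explosionTime (η * √(1 - ρ ^ 2)) (ρ * η) = 2 / (η * Real.sqrt (1 - ρ ^ 2)) *
        (Real.arctan (Real.sqrt (1 - ρ ^ 2) / ρ) + Real.pi * (if ρ < 0 then 1 else 0)) := by
      have hsign : η * ρ < 0 ↔ ρ < 0 :=
        ⟨fun h => neg_of_mul_neg_right h hη.le, mul_neg_of_pos_of_neg hη⟩
      rw [explosionTime, mul_comm ρ η, mul_div_mul_left _ _ hη.ne']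
      simp only [hsign]
    rw [← hC]
    refine hlim.congr' ?_
    filter_upwards [eventually_gt_atTop 0] with p hp
    rw [explosionTime_div hp, hT]
    rfl

/-- **Heston model: asymptotics of the moment explosion time.**
Fix Heston parameters `λ > 0`, `η > 0` and `-1 < ρ < 1` with `ρ ≠ 0`.
With `χ(p) = ρηp - λ` and `Δ(p) = χ(p)² - η²(p² - p)`, one has `Δ(p) < 0` for all
sufficiently large `p`, and the explosion time
`T*(p) = (2/√(-Δ(p))) (arctan(√(-Δ(p))/χ(p)) + π·1_{χ(p)<0})` satisfies
`p · T*(p) → C` as `p → ∞`, where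
`C = (2/(η√(1-ρ²))) (arctan(√(1-ρ²)/ρ) + π·1_{ρ<0})`. -/
theorem heston_explosion_time_asymptotics
    (lam η ρ : ℝ) (hlam : 0 < lam) (hη : 0 < η)
    (hρ1 : -1 < ρ) (hρ2 : ρ < 1) (hρ0 : ρ ≠ 0)
    (χ Δ Tstar : ℝ → ℝ)
    (hχ : ∀ p, χ p = ρ * η * p - lam)
    (hΔ : ∀ p, Δ p = (χ p) ^ 2 - η ^ 2 * (p ^ 2 - p))
    (hT : ∀ p, Tstar p = 2 / Real.sqrt (-(Δ p)) *
        (Real.arctan (Real.sqrt (-(Δ p)) / χ p) + Real.pi * (if χ p < 0 then 1 else 0))) :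
    (∀ᶠ p in atTop, Δ p < 0) ∧
    Tendsto (fun p => p * Tstar p) atTop
      (𝓝 (2 / (η * Real.sqrt (1 - ρ ^ 2)) *
        (Real.arctan (Real.sqrt (1 - ρ ^ 2) / ρ) + Real.pi * (if ρ < 0 then 1 else 0)))) :=
  heston_explosion_time_asymptotics_general lam η ρ hη hρ1 hρ2 hρ0 χ Δ Tstar hχ hΔ hT
end
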